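/- arXiv:2007.13819 — 3 statements merged into one kernel-verified Lean document; each statement's English description precedes it below -/
import Mathlib

section
/- Let D ≥ 1 and let H be a D×D nonnegative, column stochastic matrix satisfying b_i H_{i,j} = b_j H_{j,i} for a positive probability vector b, with support graph connected. Partition {1,…,N} into D nonempty blocks M^(1),…,M^(D) with block map d(·), and let v^(i) > 0 satisfy Σ_{i∈M^(d)} v^(i) = 1 for every block d. Define the N×N matrix Z by Z_{i,j} = H_{d(i),d(j)} v^(i). Then the nonzero eigenvalues of Z coincide with the nonzero eigenvalues of H, counted with multiplicity, and all remaining eigenvalues of Z are zero; equivalently, the rank of Z equals the rank of H and there is a bijection between eigenpairs of H with nonzero eigenvalue and eigenpairs of Z with nonzero eigenvalue, given by mapping an eigenvector y of H to the vector x with x_i = v^(i) y_{d(i)}. -/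
/-!
With `L i δ = [d i = δ] v i` and `R δ j = [d j = δ]` one has `Z = L * H * R`, and the
normalisation of `v` on each block says exactly `R * L = 1`. Everything then follows from this
factorisation: `charpoly (L * (H * R)) = X ^ (N - D) * charpoly ((H * R) * L)` and
`(H * R) * L = H`; `H = R * Z * L` gives equality of ranks; `L` maps eigenvectors of `H` to
eigenvectors of `Z`, and an eigenvector `x` of `Z` with eigenvalue `μ ≠ 0` lies in the range of
`L`, so that `x = L (R x)` with `R x` an eigenvector of `H`.
-/

open Matrix Polynomial

namespace Matrix

section LeftInverse

variable {m n K : Type*} [Fintype m] [Fintype n] [DecidableEq n] [Field K]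
  {L : Matrix m n K} {R : Matrix n m K}

theorem card_le_card_of_mul_eq_one (hRL : R * L = 1) : Fintype.card n ≤ Fintype.card m :=
  calc Fintype.card n = (R * L).rank := by rw [hRL, rank_one]
    _ ≤ R.rank := rank_mul_le_left R L
    _ ≤ Fintype.card m := rank_le_card_width R

theorem mulVec_mulVec_of_mul_eq_one (hRL : R * L = 1) (y : n → K) : R *ᵥ (L *ᵥ y) = y := by
  rw [mulVec_mulVec, hRL, one_mulVec]

theorem mulVec_injective_of_mul_eq_one (hRL : R * L = 1) : Function.Injective L.mulVec :=
  Function.LeftInverse.injective (mulVec_mulVec_of_mul_eq_one hRL)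

variable (A : Matrix n n K)

theorem charpoly_mul_mul_of_mul_eq_one [DecidableEq m] (hRL : R * L = 1) :
    (L * A * R).charpoly = X ^ (Fintype.card m - Fintype.card n) * A.charpoly := by
  rw [Matrix.mul_assoc, charpoly_mul_comm_of_le _ _ (card_le_card_of_mul_eq_one hRL),
    Matrix.mul_assoc, hRL, Matrix.mul_one]

theorem rank_mul_mul_of_mul_eq_one (hRL : R * L = 1) : (L * A * R).rank = A.rank := by
  have hA : A = R * (L * A * R) * L := by
    simp only [← Matrix.mul_assoc, hRL, Matrix.one_mul]
    rw [Matrix.mul_assoc, hRL, Matrix.mul_one]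
  refine le_antisymm ((rank_mul_le_left _ _).trans (rank_mul_le_right _ _)) ?_
  conv_lhs => rw [hA]
  exact (rank_mul_le_left _ _).trans (rank_mul_le_right _ _)

theorem mul_mul_mulVec_mulVec_eq_smul (hRL : R * L = 1) {μ : K} {y : n → K}
    (hy : A *ᵥ y = μ • y) : (L * A * R) *ᵥ (L *ᵥ y) = μ • (L *ᵥ y) := by
  rw [← mulVec_mulVec, mulVec_mulVec_of_mul_eq_one hRL, ← mulVec_mulVec, hy, mulVec_smul]

theorem mulVec_mulVec_eq_smul_of_mul_mul_mulVec_eq_smul (hRL : R * L = 1) {μ : K} {x : m → K}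
    (hx : (L * A * R) *ᵥ x = μ • x) : A *ᵥ (R *ᵥ x) = μ • (R *ᵥ x) :=
  calc A *ᵥ (R *ᵥ x) = R *ᵥ ((L * A * R) *ᵥ x) := by
        simp only [mulVec_mulVec, ← Matrix.mul_assoc, hRL, Matrix.one_mul]
    _ = μ • (R *ᵥ x) := by rw [hx, mulVec_smul]

theorem mulVec_mulVec_eq_self_of_mul_mul_mulVec_eq_smul (hRL : R * L = 1) {μ : K} (hμ : μ ≠ 0)
    {x : m → K} (hx : (L * A * R) *ᵥ x = μ • x) : L *ᵥ (R *ᵥ x) = x := by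
  have hxL : x = L *ᵥ (μ⁻¹ • A *ᵥ (R *ᵥ x)) := by
    rw [mulVec_smul, mulVec_mulVec, mulVec_mulVec, hx, smul_smul, inv_mul_cancel₀ hμ, one_smul]
  rw [hxL, mulVec_mulVec_of_mul_eq_one hRL]

end LeftInverse

def blockLift {m n K : Type*} [DecidableEq n] [Zero K] (d : m → n) (v : m → K) : Matrix m n K :=
  of fun i δ => if d i = δ then v i else 0

def blockIndicator {m n : Type*} (K : Type*) [DecidableEq n] [Zero K] [One K] (d : m → n) :
    Matrix n m K :=
  of fun δ j => if d j = δ then 1 else 0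

section BlockLift

variable {m n K : Type*} [Fintype n] [DecidableEq n] [Field K] (d : m → n) (v : m → K)

theorem blockLift_mulVec (y : n → K) : blockLift d v *ᵥ y = fun i => v i * y (d i) := by
  ext i
  simp [blockLift, mulVec, dotProduct]

omit [Fintype n] in
theorem blockIndicator_mul_blockLift [Fintype m]
    (hv : ∀ δ, ∑ i ∈ Finset.univ.filter (fun i => d i = δ), v i = 1) :
    blockIndicator K d * blockLift d v = 1 := by
  ext δ ε
  rw [mul_apply]
  simp only [blockIndicator, blockLift, of_apply, boole_mul]
  rw [← Finset.sum_filter]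
  by_cases h : δ = ε
  · subst h
    rw [one_apply_eq, ← hv δ]
    exact Finset.sum_congr rfl fun i hi => if_pos (Finset.mem_filter.mp hi).2
  · rw [one_apply_ne h]
    exact Finset.sum_eq_zero fun i hi => if_neg ((Finset.mem_filter.mp hi).2 ▸ h)

theorem eq_blockLift_mul_mul_blockIndicator {Z : Matrix m m K} {H : Matrix n n K}
    (hZ : ∀ i j, Z i j = H (d i) (d j) * v i) :
    Z = blockLift d v * H * blockIndicator K d := by
  ext i j
  simp [hZ, mul_apply, blockLift, blockIndicator, mul_comm]

end BlockLift

end Matrix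

theorem stmt_1_general {N D : ℕ}
    (H : Matrix (Fin D) (Fin D) ℝ)
    (d : Fin N → Fin D)
    (v : Fin N → ℝ)
    (hvsum : ∀ δ : Fin D, ∑ i ∈ Finset.univ.filter (fun i => d i = δ), v i = 1)
    (Z : Matrix (Fin N) (Fin N) ℝ) (hZ : ∀ i j, Z i j = H (d i) (d j) * v i) :
    ((Z.map (Complex.ofReal)).charpoly =
        Polynomial.X ^ (N - D) * (H.map (Complex.ofReal)).charpoly) ∧
    Z.rank = H.rank ∧
    (∀ (μ : ℂ), μ ≠ 0 → ∀ y : Fin D → ℂ, y ≠ 0 →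
      Matrix.mulVec (H.map (Complex.ofReal)) y = μ • y →
      (fun i : Fin N => (v i : ℂ) * y (d i)) ≠ 0 ∧
        Matrix.mulVec (Z.map (Complex.ofReal)) (fun i => (v i : ℂ) * y (d i)) =
          μ • fun i => (v i : ℂ) * y (d i)) ∧
    Function.Injective (fun (y : Fin D → ℂ) => fun i : Fin N => (v i : ℂ) * y (d i)) ∧
    (∀ (μ : ℂ), μ ≠ 0 → ∀ x : Fin N → ℂ, x ≠ 0 →
      Matrix.mulVec (Z.map (Complex.ofReal)) x = μ • x →
      ∃ y : Fin D → ℂ, y ≠ 0 ∧ Matrix.mulVec (H.map (Complex.ofReal)) y = μ • y ∧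
        x = fun i => (v i : ℂ) * y (d i)) := by
  set vC : Fin N → ℂ := fun i => (v i : ℂ)
  have hRL : blockIndicator ℂ d * blockLift d vC = 1 :=
    blockIndicator_mul_blockLift d vC fun δ => by simp only [vC]; exact_mod_cast hvsum δ
  have hZC : Z.map Complex.ofReal = blockLift d vC * H.map Complex.ofReal * blockIndicator ℂ d :=
    eq_blockLift_mul_mul_blockIndicator d vC fun i j => by simp [vC, hZ]
  have hlift (y : Fin D → ℂ) : (fun i => vC i * y (d i)) = blockLift d vC *ᵥ y :=
    (blockLift_mulVec d vC y).symm
  have hinj := mulVec_injective_of_mul_eq_one hRL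
  refine ⟨?_, ?_, fun μ _ y hy hHy => ?_,
    fun y₁ y₂ h => hinj ((hlift y₁).symm.trans (h.trans (hlift y₂))), fun μ hμ x hx hZx => ?_⟩
  · simpa [hZC] using charpoly_mul_mul_of_mul_eq_one _ hRL
  · rw [eq_blockLift_mul_mul_blockIndicator d v hZ,
      rank_mul_mul_of_mul_eq_one _ (blockIndicator_mul_blockLift d v hvsum)]
  · rw [hlift y, hZC]
    exact ⟨hinj.ne_iff' (mulVec_zero _) |>.mpr hy, mul_mul_mulVec_mulVec_eq_smul _ hRL hHy⟩
  · rw [hZC] at hZx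
    have hxy := mulVec_mulVec_eq_self_of_mul_mul_mulVec_eq_smul _ hRL hμ hZx
    refine ⟨_, fun h0 => hx ?_, mulVec_mulVec_eq_smul_of_mul_mul_mulVec_eq_smul _ hRL hZx,
      hxy.symm.trans (hlift _).symm⟩
    rw [← hxy, h0, mulVec_zero]

/-- **Proposition 2 of the paper.**
The nonzero eigenvalues of the lifted matrix `Z` (`Z i j = H (d i) (d j) * v i`)
coincide, with multiplicity, with the nonzero eigenvalues of `H` and all remaining
eigenvalues of `Z` are zero (expressed by the characteristic polynomial identity
`charpoly Z = X^(N−D) * charpoly H` over `ℂ`); equivalently the rank of `Z` equals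
the rank of `H`, and there is a bijection between eigenpairs of `H` with nonzero
eigenvalue and those of `Z`, given by `y ↦ x` with `x i = v i * y (d i)`. -/
theorem stmt_1 {N D : ℕ} (hD : 1 ≤ D)
    (H : Matrix (Fin D) (Fin D) ℝ) (b : Fin D → ℝ)
    (hbpos : ∀ δ, 0 < b δ) (hbsum : ∑ δ, b δ = 1)
    (hHnn : ∀ i j, 0 ≤ H i j) (hHcol : ∀ j, ∑ i, H i j = 1)
    (hHbal : ∀ i j, b i * H i j = b j * H j i)
    (hconn : (SimpleGraph.fromRel (fun i j : Fin D => 0 < H i j)).Connected)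
    (d : Fin N → Fin D) (hd : Function.Surjective d)
    (v : Fin N → ℝ) (hv : ∀ i, 0 < v i)
    (hvsum : ∀ δ : Fin D, ∑ i ∈ Finset.univ.filter (fun i => d i = δ), v i = 1)
    (Z : Matrix (Fin N) (Fin N) ℝ) (hZ : ∀ i j, Z i j = H (d i) (d j) * v i) :
    ((Z.map (Complex.ofReal)).charpoly =
        Polynomial.X ^ (N - D) * (H.map (Complex.ofReal)).charpoly) ∧
    Z.rank = H.rank ∧
    (∀ (μ : ℂ), μ ≠ 0 → ∀ y : Fin D → ℂ, y ≠ 0 →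
      Matrix.mulVec (H.map (Complex.ofReal)) y = μ • y →
      (fun i : Fin N => (v i : ℂ) * y (d i)) ≠ 0 ∧
        Matrix.mulVec (Z.map (Complex.ofReal)) (fun i => (v i : ℂ) * y (d i)) =
          μ • fun i => (v i : ℂ) * y (d i)) ∧
    Function.Injective (fun (y : Fin D → ℂ) => fun i : Fin N => (v i : ℂ) * y (d i)) ∧
    (∀ (μ : ℂ), μ ≠ 0 → ∀ x : Fin N → ℂ, x ≠ 0 →
      Matrix.mulVec (Z.map (Complex.ofReal)) x = μ • x →
      ∃ y : Fin D → ℂ, y ≠ 0 ∧ Matrix.mulVec (H.map (Complex.ofReal)) y = μ • y ∧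
        x = fun i => (v i : ℂ) * y (d i)) :=
  stmt_1_general H d v hvsum Z hZ
end

section
/- Let x^(1),…,x^(N) ∈ ℝⁿ, let F : ℝⁿ → ℝ be differentiable, and let a ∈ ℝ^N have positive entries summing to 1 and p ∈ [0,1]^N. For each i, let g^(i) = θ_i · G_i, where θ_i is a Bernoulli(p_i) random variable, G_i is a random vector in ℝⁿ with E[G_i] = ∇F(x^(i)) and E‖G_i − ∇F(x^(i))‖² ≤ β‖∇F(x^(i))‖² + σ² for constants β ≥ 0, σ ≥ 0, θ_i is independent of G_i, and the pairs (θ_1,G_1),…,(θ_N,G_N) are mutually independent. Set 𝒢 = Σ_{i=1}^N a_i g^(i) and ℋ = Σ_{i=1}^N a_i ∇F(x^(i)). Then E‖𝒢 − ℋ‖² ≤ Σ_{i=1}^N a_i² [ (p_i(β−1)+1) ‖∇F(x^(i))‖² + p_i σ² ] + Σ_{l=1}^N Σ_{j≠l} a_l a_j (1−p_j)(1−p_l) ⟨∇F(x^(j)), ∇F(x^(l))⟩. -/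
/-!
Write `Yᵢ = θᵢ Gᵢ - ∇F(xᵢ)`, so that `𝒢 - ℋ = ∑ aᵢ Yᵢ` and `E‖𝒢 - ℋ‖² = ∑ₗ ∑ⱼ aₗ aⱼ E⟪Yₗ, Yⱼ⟫`.
For `l ≠ j` the variables `Yₗ, Yⱼ` are independent, so `E⟪Yₗ, Yⱼ⟫ = ⟪EYₗ, EYⱼ⟫` with
`EYᵢ = (pᵢ - 1) ∇F(xᵢ)`. On the diagonal, the pointwise identity
`‖θ g - h‖² = θ ‖g - h‖² + (1 - θ) ‖h‖²` for `θ ∈ {0, 1}` and independence of `θᵢ` and `Gᵢ` give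
`E‖Yᵢ‖² = pᵢ E‖Gᵢ - ∇F(xᵢ)‖² + (1 - pᵢ) ‖∇F(xᵢ)‖²`, which the variance bound controls.
-/

open MeasureTheory ProbabilityTheory Finset
open scoped InnerProductSpace

section

variable {Ω E : Type*} [MeasurableSpace Ω] {μ : Measure Ω}
  [NormedAddCommGroup E] [InnerProductSpace ℝ E]

lemma norm_smul_sub_sq_of_eq_zero_or_eq_one {t : ℝ} (ht : t = 0 ∨ t = 1) (g h : E) :
    ‖t • g - h‖ ^ 2 = t * ‖g - h‖ ^ 2 + (1 - t) * ‖h‖ ^ 2 := by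
  rcases ht with rfl | rfl <;> simp

lemma integral_norm_sum_smul_sq {ι : Type*} [Fintype ι] [DecidableEq ι] (a : ι → ℝ)
    {Y : ι → Ω → E} (hY : ∀ i j, Integrable (fun ω => ⟪Y i ω, Y j ω⟫_ℝ) μ) :
    ∫ ω, ‖∑ i, a i • Y i ω‖ ^ 2 ∂μ =
      ∑ i, a i ^ 2 * ∫ ω, ‖Y i ω‖ ^ 2 ∂μ +
        ∑ l, ∑ j ∈ univ.filter (fun j => j ≠ l), a l * a j * ∫ ω, ⟪Y l ω, Y j ω⟫_ℝ ∂μ := by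
  have hexpand (ω : Ω) :
      ‖∑ i, a i • Y i ω‖ ^ 2 = ∑ l, ∑ j, a l * a j * ⟪Y l ω, Y j ω⟫_ℝ := by
    simp only [← real_inner_self_eq_norm_sq, sum_inner, inner_sum, real_inner_smul_left,
      real_inner_smul_right, mul_assoc]
    rw [sum_comm]
    simp only [mul_left_comm]
  simp_rw [hexpand]
  rw [integral_finsetSum _ fun l _ => integrable_finsetSum _ fun j _ => (hY l j).const_mul _,
    ← sum_add_distrib]
  refine sum_congr rfl fun l _ => ?_
  rw [integral_finsetSum _ fun j _ => (hY l j).const_mul _, ← add_sum_erase _ _ (mem_univ l),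
    filter_ne']
  simp only [integral_const_mul, real_inner_self_eq_norm_sq, sq]

lemma ProbabilityTheory.IndepFun.integral_inner [CompleteSpace E] [MeasurableSpace E]
    [BorelSpace E]
    {X Y : Ω → E} (hXY : IndepFun X Y μ) (hX : Integrable X μ) (hY : Integrable Y μ) :
    ∫ ω, ⟪X ω, Y ω⟫_ℝ ∂μ = ⟪∫ ω, X ω ∂μ, ∫ ω, Y ω ∂μ⟫_ℝ :=
  hXY.integral_bilin hX hY (innerSL ℝ)

variable [IsFiniteMeasure μ] {θ : Ω → ℝ}

lemma integrable_of_eq_zero_or_eq_one (hθ : AEStronglyMeasurable θ μ)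
    (hθ01 : ∀ ω, θ ω = 0 ∨ θ ω = 1) : Integrable θ μ :=
  .of_bound hθ 1 <| .of_forall fun ω => by rcases hθ01 ω with h | h <;> simp [h]

variable [MeasurableSpace E] [BorelSpace E] {G : Ω → E} {h : E}

lemma integrable_norm_smul_sub_sq (hθ : AEStronglyMeasurable θ μ)
    (hθ01 : ∀ ω, θ ω = 0 ∨ θ ω = 1) (hG : Integrable (fun ω => ‖G ω - h‖ ^ 2) μ)
    (hθG : IndepFun θ G μ) :
    Integrable (fun ω => ‖θ ω • G ω - h‖ ^ 2) μ := by
  have hθint := integrable_of_eq_zero_or_eq_one hθ hθ01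
  have hind : IndepFun θ (fun ω => ‖G ω - h‖ ^ 2) μ :=
    hθG.comp (ψ := fun g => ‖g - h‖ ^ 2) measurable_id (by fun_prop)
  simp_rw [norm_smul_sub_sq_of_eq_zero_or_eq_one (hθ01 _)]
  exact (hind.integrable_mul hθint hG).add (((integrable_const 1).sub hθint).mul_const _)

lemma integral_norm_smul_sub_sq [IsProbabilityMeasure μ] (hθ : AEStronglyMeasurable θ μ)
    (hθ01 : ∀ ω, θ ω = 0 ∨ θ ω = 1) (hG : Integrable (fun ω => ‖G ω - h‖ ^ 2) μ)
    (hθG : IndepFun θ G μ) :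
    ∫ ω, ‖θ ω • G ω - h‖ ^ 2 ∂μ =
      (∫ ω, θ ω ∂μ) * ∫ ω, ‖G ω - h‖ ^ 2 ∂μ + (1 - ∫ ω, θ ω ∂μ) * ‖h‖ ^ 2 := by
  have hθint := integrable_of_eq_zero_or_eq_one hθ hθ01
  have hind : IndepFun θ (fun ω => ‖G ω - h‖ ^ 2) μ :=
    hθG.comp (ψ := fun g => ‖g - h‖ ^ 2) measurable_id (by fun_prop)
  have hmul : Integrable (fun ω => θ ω * ‖G ω - h‖ ^ 2) μ := hind.integrable_mul hθint hG
  have hcompl : Integrable (fun ω => (1 - θ ω) * ‖h‖ ^ 2) μ :=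
    ((integrable_const 1).sub hθint).mul_const _
  simp_rw [norm_smul_sub_sq_of_eq_zero_or_eq_one (hθ01 _)]
  rw [integral_add hmul hcompl,
    hind.integral_fun_mul_eq_mul_integral hθ hG.aestronglyMeasurable, integral_mul_const,
    integral_sub (integrable_const 1) hθint, integral_const, probReal_univ, one_smul]

end

theorem stmt_4_general {n N : ℕ} {Ω : Type} [MeasurableSpace Ω]
    (μ : Measure Ω) [IsProbabilityMeasure μ]
    (F : EuclideanSpace ℝ (Fin n) → ℝ) (x : Fin N → EuclideanSpace ℝ (Fin n))
    (a p : Fin N → ℝ) (hp : ∀ i, p i ∈ Set.Icc (0 : ℝ) 1)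
    (β σ : ℝ)
    (θ : Fin N → Ω → ℝ) (G : Fin N → Ω → EuclideanSpace ℝ (Fin n))
    (hθmeas : ∀ i, Measurable (θ i))
    (hθ01 : ∀ i ω, θ i ω = 0 ∨ θ i ω = 1)
    (hθmean : ∀ i, ∫ ω, θ i ω ∂μ = p i)
    (hGint : ∀ i, Integrable (G i) μ)
    (hGmean : ∀ i, ∫ ω, G i ω ∂μ = gradient F (x i))
    (hGsqint : ∀ i, Integrable (fun ω => ‖G i ω - gradient F (x i)‖ ^ 2) μ)
    (hGvar : ∀ i, ∫ ω, ‖G i ω - gradient F (x i)‖ ^ 2 ∂μ ≤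
      β * ‖gradient F (x i)‖ ^ 2 + σ ^ 2)
    (hpair : ∀ i, IndepFun (θ i) (G i) μ)
    (hindep : iIndepFun (fun i ω => (θ i ω, G i ω)) μ) :
    ∫ ω, ‖(∑ i, a i • (θ i ω • G i ω)) - ∑ i, a i • gradient F (x i)‖ ^ 2 ∂μ ≤
      (∑ i, (a i) ^ 2 *
        ((p i * (β - 1) + 1) * ‖gradient F (x i)‖ ^ 2 + p i * σ ^ 2))
      + ∑ l, ∑ j ∈ Finset.univ.filter (fun j => j ≠ l),
          a l * a j * (1 - p j) * (1 - p l) *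
            (inner ℝ (gradient F (x j)) (gradient F (x l)) : ℝ) := by
  set Y := fun i ω => θ i ω • G i ω - gradient F (x i)
  have hθ i : AEStronglyMeasurable (θ i) μ := (hθmeas i).aestronglyMeasurable
  have hθGint i : Integrable (fun ω => θ i ω • G i ω) μ :=
    (hpair i).integrable_smul (integrable_of_eq_zero_or_eq_one (hθ i) (hθ01 i)) (hGint i)
  have hYmean i : ∫ ω, Y i ω ∂μ = (p i - 1) • gradient F (x i) := by
    rw [integral_sub (hθGint i) (integrable_const _), (hpair i).integral_fun_smul_eq_smul_integral
      (hθ i) (hGint i).aestronglyMeasurable, hθmean, hGmean, integral_const, probReal_univ,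
      one_smul, sub_smul, one_smul]
  have hYindep i j (hij : i ≠ j) : IndepFun (Y i) (Y j) μ :=
    (hindep.indepFun hij).comp
      ((measurable_fst.smul measurable_snd).sub_const (gradient F (x i)))
      ((measurable_fst.smul measurable_snd).sub_const (gradient F (x j)))
  have hYint i : Integrable (Y i) μ := (hθGint i).sub (integrable_const _)
  have hinner i j : Integrable (fun ω => ⟪Y i ω, Y j ω⟫_ℝ) μ := by
    rcases eq_or_ne i j with rfl | hij
    · simpa only [real_inner_self_eq_norm_sq] using
        integrable_norm_smul_sub_sq (hθ i) (hθ01 i) (hGsqint i) (hpair i)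
    · exact (hYindep i j hij).integrable_bilin (hYint i) (hYint j) (innerSL ℝ)
  have hsum ω :
      (∑ i, a i • (θ i ω • G i ω)) - ∑ i, a i • gradient F (x i) = ∑ i, a i • Y i ω := by
    simp only [Y, smul_sub, sum_sub_distrib]
  simp_rw [hsum]
  rw [integral_norm_sum_smul_sq a hinner]
  refine add_le_add (sum_le_sum fun i _ => ?_)
    (sum_le_sum fun l _ => (sum_congr rfl fun j hj => ?_).le)
  · rw [integral_norm_smul_sub_sq (hθ i) (hθ01 i) (hGsqint i) (hpair i), hθmean]
    refine mul_le_mul_of_nonneg_left ?_ (sq_nonneg _)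
    nlinarith [mul_le_mul_of_nonneg_left (hGvar i) (hp i).1]
  · rw [(hYindep l j (mem_filter.1 hj).2.symm).integral_inner (hYint l) (hYint j),
      hYmean, hYmean, real_inner_smul_left, real_inner_smul_right, real_inner_comm]
    ring

/-- **Lemma 1 of the paper.**
Variance bound for the weighted average stochastic gradient
`𝒢 = ∑ i, a i • (θ i • G i)` around `ℋ = ∑ i, a i • ∇F(x i)` in MLL-SGD, where
`θ i` is Bernoulli(`p i`), `E[G i] = ∇F(x i)`,
`E‖G i − ∇F(x i)‖² ≤ β‖∇F(x i)‖² + σ²`, `θ i` is independent of `G i`, and the pairs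
`(θ i, G i)` are mutually independent:
`E‖𝒢 − ℋ‖² ≤ ∑ i a i² [(p i (β−1)+1)‖∇F(x i)‖² + p i σ²]
  + ∑ l ∑_{j ≠ l} a l a j (1−p j)(1−p l) ⟨∇F(x j), ∇F(x l)⟩`. -/
theorem stmt_4 {n N : ℕ} {Ω : Type} [MeasurableSpace Ω]
    (μ : Measure Ω) [IsProbabilityMeasure μ]
    (F : EuclideanSpace ℝ (Fin n) → ℝ) (hF : Differentiable ℝ F)
    (x : Fin N → EuclideanSpace ℝ (Fin n))
    (a p : Fin N → ℝ) (hapos : ∀ i, 0 < a i) (hasum : ∑ i, a i = 1)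
    (hp : ∀ i, p i ∈ Set.Icc (0 : ℝ) 1)
    (β σ : ℝ) (hβ : 0 ≤ β) (hσ : 0 ≤ σ)
    (θ : Fin N → Ω → ℝ) (G : Fin N → Ω → EuclideanSpace ℝ (Fin n))
    (hθmeas : ∀ i, Measurable (θ i)) (hGmeas : ∀ i, Measurable (G i))
    (hθ01 : ∀ i ω, θ i ω = 0 ∨ θ i ω = 1)
    (hθmean : ∀ i, ∫ ω, θ i ω ∂μ = p i)
    (hGint : ∀ i, Integrable (G i) μ)
    (hGmean : ∀ i, ∫ ω, G i ω ∂μ = gradient F (x i))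
    (hGsqint : ∀ i, Integrable (fun ω => ‖G i ω - gradient F (x i)‖ ^ 2) μ)
    (hGvar : ∀ i, ∫ ω, ‖G i ω - gradient F (x i)‖ ^ 2 ∂μ ≤
      β * ‖gradient F (x i)‖ ^ 2 + σ ^ 2)
    (hpair : ∀ i, IndepFun (θ i) (G i) μ)
    (hindep : iIndepFun (fun i ω => (θ i ω, G i ω)) μ) :
    ∫ ω, ‖(∑ i, a i • (θ i ω • G i ω)) - ∑ i, a i • gradient F (x i)‖ ^ 2 ∂μ ≤
      (∑ i, (a i) ^ 2 *
        ((p i * (β - 1) + 1) * ‖gradient F (x i)‖ ^ 2 + p i * σ ^ 2))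
      + ∑ l, ∑ j ∈ Finset.univ.filter (fun j => j ≠ l),
          a l * a j * (1 - p j) * (1 - p l) *
            (inner ℝ (gradient F (x j)) (gradient F (x l)) : ℝ) :=
  stmt_4_general μ F x a p hp β σ θ G hθmeas hθ01 hθmean hGint hGmean hGsqint hGvar hpair hindep
end

section
/- Let x^(1),…,x^(N) ∈ ℝⁿ, let F : ℝⁿ → ℝ be differentiable, and let a ∈ ℝ^N have positive entries summing to 1 and p ∈ [0,1]^N. For each i, let g^(i) = θ_i · G_i, where θ_i is Bernoulli(p_i), G_i is a random vector with E[G_i] = ∇F(x^(i)) and E‖G_i − ∇F(x^(i))‖² ≤ β‖∇F(x^(i))‖² + σ², θ_i is independent of G_i, and the pairs (θ_i, G_i) are mutually independent across i. Set 𝒢 = Σ_{i=1}^N a_i g^(i). Then E‖𝒢‖² ≤ Σ_{i=1}^N [ a_i²(p_i(β+1) − p_i²) + a_i p_i² ] ‖∇F(x^(i))‖² + σ² Σ_{i=1}^N a_i² p_i. -/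
/-!
Pairwise independence makes the cross terms of `E‖∑ aᵢ gᵢ‖²` factor, so the second moment
splits as `∑ aᵢ² (E‖gᵢ‖² - ‖E gᵢ‖²) + ‖∑ aᵢ E gᵢ‖²`. Since `θᵢ` is a Bernoulli mask independent
of `Gᵢ`, `E gᵢ = pᵢ ∇F(xᵢ)` and `E‖gᵢ‖² = pᵢ E‖Gᵢ‖² ≤ pᵢ ((β + 1)‖∇F(xᵢ)‖² + σ²)`, while Jensen's
inequality for `‖·‖²` bounds the mean term by `∑ aᵢ pᵢ² ‖∇F(xᵢ)‖²`.
-/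

open MeasureTheory ProbabilityTheory
open scoped RealInnerProductSpace

lemma norm_sum_smul_sq_le_sum_mul_norm_sq {ι E : Type*} [SeminormedAddCommGroup E]
    [NormedSpace ℝ E] {s : Finset ι} {w : ι → ℝ} (z : ι → E) (hw₀ : ∀ i ∈ s, 0 ≤ w i)
    (hw₁ : ∑ i ∈ s, w i = 1) :
    ‖∑ i ∈ s, w i • z i‖ ^ 2 ≤ ∑ i ∈ s, w i * ‖z i‖ ^ 2 :=
  ((convexOn_univ_norm.pow (fun _ _ => norm_nonneg _) 2).map_sum_le hw₀ hw₁
    fun _ _ => Set.mem_univ _).trans_eq (by simp)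

section

variable {Ω E : Type*} [MeasurableSpace Ω] {μ : Measure Ω}
  [NormedAddCommGroup E] [InnerProductSpace ℝ E]

lemma integral_norm_sq_eq_integral_norm_sub_integral_sq_add [CompleteSpace E]
    [IsProbabilityMeasure μ]
    {G : Ω → E} (hG : MemLp G 2 μ) :
    ∫ ω, ‖G ω‖ ^ 2 ∂μ = ∫ ω, ‖G ω - μ[G]‖ ^ 2 ∂μ + ‖μ[G]‖ ^ 2 := by
  set m := μ[G]
  have hGc : MemLp (fun ω => G ω - m) 2 μ := hG.sub (memLp_const m)
  have hcross_int : Integrable (fun ω => 2 * ⟪m, G ω - m⟫) μ :=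
    ((hGc.integrable one_le_two).const_inner m).const_mul 2
  have hcross : ∫ ω, ⟪m, G ω - m⟫ ∂μ = 0 := by
    rw [integral_inner (hGc.integrable one_le_two), integral_sub (hG.integrable one_le_two)
      (integrable_const m)]
    simp [m]
  have hexpand ω : ‖G ω‖ ^ 2 = ‖G ω - m‖ ^ 2 + 2 * ⟪m, G ω - m⟫ + ‖m‖ ^ 2 := by
    rw [← sub_add_cancel (G ω) m, norm_add_sq_real, add_sub_cancel_right, real_inner_comm]
  have hsq_int : Integrable (fun ω => ‖G ω - m‖ ^ 2) μ := hGc.integrable_norm_pow two_ne_zero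
  simp_rw [hexpand]
  rw [integral_add (hsq_int.fun_add hcross_int) (integrable_const _),
    integral_add hsq_int hcross_int, integral_const_mul, hcross]
  simp

lemma ProbabilityTheory.IndepFun.integral_norm_smul_sq [MeasurableSpace E] [OpensMeasurableSpace E]
    {θ : Ω → ℝ} {G : Ω → E} (h : IndepFun θ G μ) (hθ : AEMeasurable θ μ)
    (hG : AEMeasurable G μ) :
    ∫ ω, ‖θ ω • G ω‖ ^ 2 ∂μ = (∫ ω, θ ω ^ 2 ∂μ) * ∫ ω, ‖G ω‖ ^ 2 ∂μ := by
  simp_rw [norm_smul, mul_pow, Real.norm_eq_abs, sq_abs]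
  exact h.integral_fun_comp_mul_comp (f := fun t => t ^ 2) (g := fun y => ‖y‖ ^ 2) hθ hG
    (continuous_pow 2).aestronglyMeasurable (continuous_norm.pow 2).aestronglyMeasurable

lemma norm_sum_smul_sq_eq_sum_sum_inner {ι : Type*} (s : Finset ι) (c : ι → ℝ) (z : ι → E) :
    ‖∑ i ∈ s, c i • z i‖ ^ 2 = ∑ i ∈ s, ∑ j ∈ s, c i * c j * ⟪z i, z j⟫ := by
  simp_rw [← real_inner_self_eq_norm_sq, sum_inner, inner_sum, real_inner_smul_left,
    real_inner_smul_right, mul_assoc]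

theorem integral_norm_sum_smul_sq_of_pairwise_indepFun [CompleteSpace E] [MeasurableSpace E]
    [BorelSpace E] [IsFiniteMeasure μ] {ι : Type*} [Fintype ι] {X : ι → Ω → E}
    (hX : ∀ i, MemLp (X i) 2 μ) (hindep : Pairwise fun i j => IndepFun (X i) (X j) μ)
    (c : ι → ℝ) :
    ∫ ω, ‖∑ i, c i • X i ω‖ ^ 2 ∂μ =
      ∑ i, c i ^ 2 * (∫ ω, ‖X i ω‖ ^ 2 ∂μ - ‖μ[X i]‖ ^ 2) + ‖∑ i, c i • μ[X i]‖ ^ 2 := by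
  classical
  have hint i : Integrable (X i) μ := (hX i).integrable one_le_two
  have hinner i j : Integrable (fun ω => ⟪X i ω, X j ω⟫) μ ∧
      ∫ ω, ⟪X i ω, X j ω⟫ ∂μ = ⟪μ[X i], μ[X j]⟫ +
        if i = j then ∫ ω, ‖X i ω‖ ^ 2 ∂μ - ‖μ[X i]‖ ^ 2 else 0 := by
    by_cases hij : i = j
    · subst hij
      simp_rw [real_inner_self_eq_norm_sq, if_pos]
      exact ⟨(hX i).integrable_norm_pow two_ne_zero, by ring⟩
    · rw [if_neg hij, add_zero]
      exact ⟨(hindep hij).integrable_bilin (hint i) (hint j) (innerSL ℝ),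
        (hindep hij).integral_bilin (hint i) (hint j) (innerSL ℝ)⟩
  simp_rw [norm_sum_smul_sq_eq_sum_sum_inner]
  rw [integral_finsetSum _ fun i _ => integrable_finsetSum _ fun j _ =>
    (hinner i j).1.const_mul _]
  simp_rw [integral_finsetSum _ fun j _ => (hinner _ j).1.const_mul _, integral_const_mul,
    (hinner _ _).2, mul_add, Finset.sum_add_distrib, mul_ite, mul_zero, Finset.sum_ite_eq,
    Finset.mem_univ, if_true, ← pow_two]
  ring

end

theorem stmt_5_general {n N : ℕ} {Ω : Type} [MeasurableSpace Ω]
    (μ : Measure Ω) [IsProbabilityMeasure μ]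
    (F : EuclideanSpace ℝ (Fin n) → ℝ)
    (x : Fin N → EuclideanSpace ℝ (Fin n))
    (a p : Fin N → ℝ) (hapos : ∀ i, 0 < a i) (hasum : ∑ i, a i = 1)
    (hp : ∀ i, p i ∈ Set.Icc (0 : ℝ) 1)
    (β σ : ℝ)
    (θ : Fin N → Ω → ℝ) (G : Fin N → Ω → EuclideanSpace ℝ (Fin n))
    (hθmeas : ∀ i, Measurable (θ i)) (hGmeas : ∀ i, Measurable (G i))
    (hθ01 : ∀ i ω, θ i ω = 0 ∨ θ i ω = 1)
    (hθmean : ∀ i, ∫ ω, θ i ω ∂μ = p i)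
    (hGmean : ∀ i, ∫ ω, G i ω ∂μ = gradient F (x i))
    (hGsqint : ∀ i, Integrable (fun ω => ‖G i ω - gradient F (x i)‖ ^ 2) μ)
    (hGvar : ∀ i, ∫ ω, ‖G i ω - gradient F (x i)‖ ^ 2 ∂μ ≤
      β * ‖gradient F (x i)‖ ^ 2 + σ ^ 2)
    (hpair : ∀ i, IndepFun (θ i) (G i) μ)
    (hindep : iIndepFun (fun i ω => (θ i ω, G i ω)) μ) :
    ∫ ω, ‖∑ i, a i • (θ i ω • G i ω)‖ ^ 2 ∂μ ≤
      (∑ i, ((a i) ^ 2 * (p i * (β + 1) - (p i) ^ 2) + a i * (p i) ^ 2) *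
        ‖gradient F (x i)‖ ^ 2)
      + σ ^ 2 * ∑ i, (a i) ^ 2 * p i := by
  have hGL2 i : MemLp (G i) 2 μ := by
    have hc := (memLp_two_iff_integrable_sq_norm
      ((hGmeas i).sub_const (gradient F (x i))).aestronglyMeasurable).2 (hGsqint i)
    simpa [Pi.add_def] using hc.add (memLp_const (gradient F (x i)))
  have hθsq i ω : θ i ω ^ 2 = θ i ω := by rcases hθ01 i ω with h | h <;> simp [h]
  have hgL2 i : MemLp (fun ω => θ i ω • G i ω) 2 μ :=
    (hGL2 i).smul (memLp_top_of_bound (hθmeas i).aestronglyMeasurable 1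
      (ae_of_all _ fun ω => by rcases hθ01 i ω with h | h <;> simp [h]))
  have hgmean i : ∫ ω, θ i ω • G i ω ∂μ = p i • gradient F (x i) := by
    rw [← hθmean i, ← hGmean i]
    exact (hpair i).integral_fun_smul_eq_smul_integral (hθmeas i).aestronglyMeasurable
      (hGmeas i).aestronglyMeasurable
  have hgsq i : ∫ ω, ‖θ i ω • G i ω‖ ^ 2 ∂μ ≤
      p i * ((β + 1) * ‖gradient F (x i)‖ ^ 2 + σ ^ 2) := by
    rw [(hpair i).integral_norm_smul_sq (hθmeas i).aemeasurable (hGmeas i).aemeasurable,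
      integral_norm_sq_eq_integral_norm_sub_integral_sq_add (hGL2 i), hGmean i]
    simp_rw [hθsq, hθmean]
    exact mul_le_mul_of_nonneg_left (by linarith [hGvar i]) (hp i).1
  have hgindep :
      Pairwise fun i j => IndepFun (fun ω => θ i ω • G i ω) (fun ω => θ j ω • G j ω) μ :=
    fun i j hij => (hindep.indepFun hij).comp (measurable_fst.smul measurable_snd)
      (measurable_fst.smul measurable_snd)
  rw [integral_norm_sum_smul_sq_of_pairwise_indepFun hgL2 hgindep a]
  simp_rw [hgmean]
  calc _ ≤ ∑ i, a i ^ 2 * (p i * ((β + 1) * ‖gradient F (x i)‖ ^ 2 + σ ^ 2)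
          - ‖p i • gradient F (x i)‖ ^ 2) + ∑ i, a i * ‖p i • gradient F (x i)‖ ^ 2 := by
        gcongr with i
        · exact hgsq i
        · exact norm_sum_smul_sq_le_sum_mul_norm_sq _ (fun i _ => (hapos i).le) hasum
    _ = _ := by
      simp_rw [norm_smul, mul_pow, Real.norm_eq_abs, sq_abs, Finset.mul_sum,
        ← Finset.sum_add_distrib]
      exact Finset.sum_congr rfl fun i _ => by ring

/-- **Lemma 2 of the paper.**
Second-moment bound for the weighted average stochastic gradient
`𝒢 = ∑ i, a i • (θ i • G i)` in MLL-SGD, with `θ i` Bernoulli(`p i`) independent of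
`G i`, `E[G i] = ∇F(x i)`, `E‖G i − ∇F(x i)‖² ≤ β‖∇F(x i)‖² + σ²`, and the pairs
`(θ i, G i)` mutually independent:
`E‖𝒢‖² ≤ ∑ i [a i²(p i(β+1) − p i²) + a i p i²]‖∇F(x i)‖² + σ² ∑ i a i² p i`. -/
theorem stmt_5 {n N : ℕ} {Ω : Type} [MeasurableSpace Ω]
    (μ : Measure Ω) [IsProbabilityMeasure μ]
    (F : EuclideanSpace ℝ (Fin n) → ℝ) (hF : Differentiable ℝ F)
    (x : Fin N → EuclideanSpace ℝ (Fin n))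
    (a p : Fin N → ℝ) (hapos : ∀ i, 0 < a i) (hasum : ∑ i, a i = 1)
    (hp : ∀ i, p i ∈ Set.Icc (0 : ℝ) 1)
    (β σ : ℝ) (hβ : 0 ≤ β) (hσ : 0 ≤ σ)
    (θ : Fin N → Ω → ℝ) (G : Fin N → Ω → EuclideanSpace ℝ (Fin n))
    (hθmeas : ∀ i, Measurable (θ i)) (hGmeas : ∀ i, Measurable (G i))
    (hθ01 : ∀ i ω, θ i ω = 0 ∨ θ i ω = 1)
    (hθmean : ∀ i, ∫ ω, θ i ω ∂μ = p i)
    (hGint : ∀ i, Integrable (G i) μ)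
    (hGmean : ∀ i, ∫ ω, G i ω ∂μ = gradient F (x i))
    (hGsqint : ∀ i, Integrable (fun ω => ‖G i ω - gradient F (x i)‖ ^ 2) μ)
    (hGvar : ∀ i, ∫ ω, ‖G i ω - gradient F (x i)‖ ^ 2 ∂μ ≤
      β * ‖gradient F (x i)‖ ^ 2 + σ ^ 2)
    (hpair : ∀ i, IndepFun (θ i) (G i) μ)
    (hindep : iIndepFun (fun i ω => (θ i ω, G i ω)) μ) :
    ∫ ω, ‖∑ i, a i • (θ i ω • G i ω)‖ ^ 2 ∂μ ≤
      (∑ i, ((a i) ^ 2 * (p i * (β + 1) - (p i) ^ 2) + a i * (p i) ^ 2) *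
        ‖gradient F (x i)‖ ^ 2)
      + σ ^ 2 * ∑ i, (a i) ^ 2 * p i :=
  stmt_5_general μ F x a p hapos hasum hp β σ θ G hθmeas hGmeas hθ01 hθmean hGmean hGsqint hGvar
    hpair hindep
end
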